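/- With W as in the SMART inverse-probability weight (W = (I(A)/ℓ)[1 − D + D(R·I(B)/p + (1−R)·I(C)/q)] with the independence and Bernoulli assumptions), for any bounded random variable X measurable with respect to (D, R) and the baseline information (i.e., independent of the treatment-assignment indicators I(A), I(B), I(C) conditionally on (D,R)), E[W·X] = E[X]. -/

import Mathlib

open MeasureTheory ProbabilityTheory

/-!
The first-stage indicator `IA` is independent of the rest of the weight and of `X` and has
mean `ℓ`, so `IA / ℓ` averages out to `1` against the second-stage factor times `X`. In that
factor, the conditional Bernoulli identities for `IB` and `IC` turn `R·IB/p` and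
`(1 - R)·IC/q` into `R` and `1 - R` under the integral, and `1 - D + D (R + (1 - R)) = 1`.
-/

lemma mul_eq_zero_or_eq_one {M₀ : Type*} [MulZeroOneClass M₀] {a b : M₀}
    (ha : a = 0 ∨ a = 1) (hb : b = 0 ∨ b = 1) : a * b = 0 ∨ a * b = 1 := by
  rcases ha with rfl | rfl <;> simp [hb]

lemma one_sub_eq_zero_or_eq_one {R : Type*} [Ring R] {a : R} (ha : a = 0 ∨ a = 1) :
    1 - a = 0 ∨ 1 - a = 1 := by
  rcases ha with rfl | rfl <;> simp

section

variable {Ω : Type*} [MeasurableSpace Ω] {μ : Measure Ω}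

lemma MeasureTheory.Integrable.mul_of_eq_zero_or_eq_one {f X : Ω → ℝ} (hX : Integrable X μ)
    (hf : Measurable f) (hf01 : ∀ ω, f ω = 0 ∨ f ω = 1) :
    Integrable (fun ω => f ω * X ω) μ :=
  hX.bdd_mul (c := 1) hf.aestronglyMeasurable <| .of_forall fun ω => by
    rcases hf01 ω with h | h <;> simp [h]

theorem integral_div_mul_eq_integral_of_indepFun {A Y : Ω → ℝ} {ℓ : ℝ} (hℓ : ℓ ≠ 0)
    (hA : AEStronglyMeasurable A μ) (hY : AEStronglyMeasurable Y μ) (hAY : IndepFun A Y μ)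
    (hA_mean : ∫ ω, A ω ∂μ = ℓ) :
    ∫ ω, A ω / ℓ * Y ω ∂μ = ∫ ω, Y ω ∂μ := by
  calc ∫ ω, A ω / ℓ * Y ω ∂μ = ℓ⁻¹ * ∫ ω, (A * Y) ω ∂μ := by
        simp_rw [div_eq_inv_mul, mul_assoc]
        exact integral_const_mul _ _
    _ = ∫ ω, Y ω ∂μ := by
        rw [hAY.integral_mul_eq_mul_integral hA hY, hA_mean, inv_mul_cancel_left₀ hℓ]

theorem integral_secondStageWeight_mul {D R IB IC X : Ω → ℝ} {p q : ℝ} (hp : p ≠ 0)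
    (hq : q ≠ 0) (hDm : Measurable D) (hRm : Measurable R) (hIBm : Measurable IB)
    (hICm : Measurable IC) (hD01 : ∀ ω, D ω = 0 ∨ D ω = 1) (hR01 : ∀ ω, R ω = 0 ∨ R ω = 1)
    (hIB01 : ∀ ω, IB ω = 0 ∨ IB ω = 1) (hIC01 : ∀ ω, IC ω = 0 ∨ IC ω = 1)
    (hX : Integrable X μ)
    (hB : ∫ ω, D ω * R ω * IB ω * X ω ∂μ = p * ∫ ω, D ω * R ω * X ω ∂μ)
    (hC : ∫ ω, D ω * (1 - R ω) * IC ω * X ω ∂μ = q * ∫ ω, D ω * (1 - R ω) * X ω ∂μ) :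
    ∫ ω, (1 - D ω + D ω * (R ω * IB ω / p + (1 - R ω) * IC ω / q)) * X ω ∂μ
      = ∫ ω, X ω ∂μ := by
  have hR'01 ω := one_sub_eq_zero_or_eq_one (hR01 ω)
  have hDR01 ω := mul_eq_zero_or_eq_one (hD01 ω) (hR01 ω)
  have hDR'01 ω := mul_eq_zero_or_eq_one (hD01 ω) (hR'01 ω)
  have iD := hX.mul_of_eq_zero_or_eq_one hDm hD01
  have iDR : Integrable (fun ω => D ω * R ω * X ω) μ :=
    hX.mul_of_eq_zero_or_eq_one (by fun_prop) hDR01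
  have iDR' : Integrable (fun ω => D ω * (1 - R ω) * X ω) μ :=
    hX.mul_of_eq_zero_or_eq_one (by fun_prop) hDR'01
  have iDRB : Integrable (fun ω => D ω * R ω * IB ω * X ω) μ :=
    hX.mul_of_eq_zero_or_eq_one (by fun_prop) fun ω => mul_eq_zero_or_eq_one (hDR01 ω) (hIB01 ω)
  have iDRC : Integrable (fun ω => D ω * (1 - R ω) * IC ω * X ω) μ :=
    hX.mul_of_eq_zero_or_eq_one (by fun_prop) fun ω => mul_eq_zero_or_eq_one (hDR'01 ω) (hIC01 ω)
  have hsplit : ∫ ω, D ω * X ω ∂μ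
      = ∫ ω, D ω * R ω * X ω ∂μ + ∫ ω, D ω * (1 - R ω) * X ω ∂μ := by
    rw [← integral_add iDR iDR']
    congr with ω
    ring
  have hexpand : (fun ω => (1 - D ω + D ω * (R ω * IB ω / p + (1 - R ω) * IC ω / q)) * X ω)
      = fun ω => X ω - D ω * X ω + (p⁻¹ * (D ω * R ω * IB ω * X ω)
          + q⁻¹ * (D ω * (1 - R ω) * IC ω * X ω)) := by
    funext ω
    field_simp
  have iBC : Integrable (fun ω => p⁻¹ * (D ω * R ω * IB ω * X ω)
      + q⁻¹ * (D ω * (1 - R ω) * IC ω * X ω)) μ :=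
    (iDRB.const_mul _).add (iDRC.const_mul _)
  rw [hexpand, integral_add (f := fun ω => X ω - D ω * X ω) (hX.sub iD) iBC,
    integral_sub hX iD, integral_add (iDRB.const_mul _) (iDRC.const_mul _),
    integral_const_mul, integral_const_mul, hB, hC, hsplit, inv_mul_cancel_left₀ hp,
    inv_mul_cancel_left₀ hq]
  ring

end

theorem smart_ipw_unbiased_general
    {Ω : Type*} [MeasurableSpace Ω] (μ : Measure Ω) [IsProbabilityMeasure μ]
    (IA D R IB IC X : Ω → ℝ) (ℓ p q : ℝ)
    (hℓ : 0 < ℓ) (hp : 0 < p) (hq : 0 < q)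
    (hIAm : Measurable IA) (hDm : Measurable D) (hRm : Measurable R)
    (hIBm : Measurable IB) (hICm : Measurable IC) (hXm : Measurable X)
    (hD01 : ∀ ω, D ω = 0 ∨ D ω = 1)
    (hR01 : ∀ ω, R ω = 0 ∨ R ω = 1) (hIB01 : ∀ ω, IB ω = 0 ∨ IB ω = 1)
    (hIC01 : ∀ ω, IC ω = 0 ∨ IC ω = 1)
    -- `X` is bounded
    (hXbdd : ∃ C : ℝ, ∀ ω, |X ω| ≤ C)
    -- `IA` is Bernoulli(ℓ), independent of everything else (including `X`)
    (hIAindep : IndepFun IA (fun ω => (D ω, R ω, IB ω, IC ω, X ω)) μ)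
    (hIAmean : ∫ ω, IA ω ∂μ = ℓ)
    -- conditionally on `(D, R)`, `IB` is Bernoulli(p) independent of `X`
    (hB : ∫ ω, D ω * R ω * IB ω * X ω ∂μ = p * ∫ ω, D ω * R ω * X ω ∂μ)
    -- conditionally on `(D, R)`, `IC` is Bernoulli(q) independent of `X`
    (hC : ∫ ω, D ω * (1 - R ω) * IC ω * X ω ∂μ
        = q * ∫ ω, D ω * (1 - R ω) * X ω ∂μ) :
    ∫ ω, (IA ω / ℓ) *
        (1 - D ω + D ω * (R ω * IB ω / p + (1 - R ω) * IC ω / q)) * X ω ∂μ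
      = ∫ ω, X ω ∂μ := by
  obtain ⟨C, hXC⟩ := hXbdd
  have hX : Integrable X μ := .of_bound hXm.aestronglyMeasurable C (.of_forall hXC)
  let secondStage (v : ℝ × ℝ × ℝ × ℝ × ℝ) : ℝ :=
    (1 - v.1 + v.1 * (v.2.1 * v.2.2.1 / p + (1 - v.2.1) * v.2.2.2.1 / q)) * v.2.2.2.2
  have hsecondStage : Measurable secondStage := by fun_prop
  calc _ = ∫ ω, IA ω / ℓ * secondStage (D ω, R ω, IB ω, IC ω, X ω) ∂μ := by
        simp only [secondStage, mul_assoc]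
    _ = ∫ ω, secondStage (D ω, R ω, IB ω, IC ω, X ω) ∂μ :=
        integral_div_mul_eq_integral_of_indepFun hℓ.ne' hIAm.aestronglyMeasurable
          (by fun_prop) (hIAindep.comp measurable_id hsecondStage) hIAmean
    _ = ∫ ω, X ω ∂μ :=
        integral_secondStageWeight_mul hp.ne' hq.ne' hDm hRm hIBm hICm hD01 hR01 hIB01 hIC01
          hX hB hC

/-- Unbiasedness of inverse probability weighting in a two-stage SMART: with the weight
`W = (I(A)/ℓ)[1 − D + D(R·I(B)/p + (1−R)·I(C)/q)]`, for any bounded random variable `X`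
determined by `(D, R)` and baseline information (independent of the treatment indicators
`IA`, `IB`, `IC` conditionally on `(D, R)`), we have `E[W·X] = E[X]`. -/
theorem smart_ipw_unbiased
    {Ω : Type*} [MeasurableSpace Ω] (μ : Measure Ω) [IsProbabilityMeasure μ]
    (IA D R IB IC X : Ω → ℝ) (ℓ p q : ℝ)
    (hℓ : 0 < ℓ) (hℓ1 : ℓ ≤ 1) (hp : 0 < p) (hp1 : p ≤ 1) (hq : 0 < q) (hq1 : q ≤ 1)
    (hIAm : Measurable IA) (hDm : Measurable D) (hRm : Measurable R)
    (hIBm : Measurable IB) (hICm : Measurable IC) (hXm : Measurable X)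
    (hIA01 : ∀ ω, IA ω = 0 ∨ IA ω = 1) (hD01 : ∀ ω, D ω = 0 ∨ D ω = 1)
    (hR01 : ∀ ω, R ω = 0 ∨ R ω = 1) (hIB01 : ∀ ω, IB ω = 0 ∨ IB ω = 1)
    (hIC01 : ∀ ω, IC ω = 0 ∨ IC ω = 1)
    -- `X` is bounded
    (hXbdd : ∃ C : ℝ, ∀ ω, |X ω| ≤ C)
    -- `IA` is Bernoulli(ℓ), independent of everything else (including `X`)
    (hIAindep : IndepFun IA (fun ω => (D ω, R ω, IB ω, IC ω, X ω)) μ)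
    (hIAmean : ∫ ω, IA ω ∂μ = ℓ)
    -- conditionally on `(D, R)`, `IB` is Bernoulli(p) independent of `X`
    (hB : ∫ ω, D ω * R ω * IB ω * X ω ∂μ = p * ∫ ω, D ω * R ω * X ω ∂μ)
    -- conditionally on `(D, R)`, `IC` is Bernoulli(q) independent of `X`
    (hC : ∫ ω, D ω * (1 - R ω) * IC ω * X ω ∂μ
        = q * ∫ ω, D ω * (1 - R ω) * X ω ∂μ) :
    ∫ ω, (IA ω / ℓ) *
        (1 - D ω + D ω * (R ω * IB ω / p + (1 - R ω) * IC ω / q)) * X ω ∂μ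
      = ∫ ω, X ω ∂μ :=
  smart_ipw_unbiased_general μ IA D R IB IC X ℓ p q hℓ hp hq hIAm hDm hRm hIBm hICm hXm hD01 hR01
    hIB01 hIC01 hXbdd hIAindep hIAmean hB hC
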